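/- arXiv:2108.07970 — 3 statements merged into one kernel-verified Lean document; each statement's English description precedes it below -/
import Mathlib

section
/- Let M be an n×n real matrix, λ ∈ ℝ and v ∈ ℝⁿ with M v = λ v. Let A, D be d_x×d_x real matrices, B, E be d_x×d_u real matrices, and let x, w ∈ ℝ^{d_x×n}, u ∈ ℝ^{d_u×n} be matrices satisfying x⁺ = A x + B u + D x M + E u M + w. Then x⁺ v vᵀ = (A + λ D)(x v vᵀ) + (B + λ E)(u v vᵀ) + w v vᵀ. -/
open Matrix

theorem Matrix.mul_vecMulVec_of_mulVec_eq_smul {m n α : Type*} [Fintype m] [Semiring α]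
    {M : Matrix m m α} {c : α} {x : m → α} (hx : M *ᵥ x = c • x) (y : n → α) :
    M * vecMulVec x y = c • vecMulVec x y := by
  rw [mul_vecMulVec, hx, smul_vecMulVec]

/-- **Eigenstate dynamics.** If `M v = λ v` and the global state evolves as
`x⁺ = A x + B u + D x M + E u M + w`, then the eigenstate `x v vᵀ` evolves as
`x⁺ v vᵀ = (A + λ D)(x v vᵀ) + (B + λ E)(u v vᵀ) + w v vᵀ`. -/
theorem eigenstate_dynamics
    {n dx du : ℕ}
    (M : Matrix (Fin n) (Fin n) ℝ) (lam : ℝ) (v : Fin n → ℝ)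
    (hv : M.mulVec v = lam • v)
    (A D : Matrix (Fin dx) (Fin dx) ℝ) (B E : Matrix (Fin dx) (Fin du) ℝ)
    (x xp w : Matrix (Fin dx) (Fin n) ℝ) (u : Matrix (Fin du) (Fin n) ℝ)
    (hdyn : xp = A * x + B * u + D * (x * M) + E * (u * M) + w) :
    xp * vecMulVec v v =
      (A + lam • D) * (x * vecMulVec v v) + (B + lam • E) * (u * vecMulVec v v)
        + w * vecMulVec v v := by
  have hMvv : M * vecMulVec v v = lam • vecMulVec v v := mul_vecMulVec_of_mulVec_eq_smul hv v
  subst hdyn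
  simp only [Matrix.add_mul, Matrix.mul_assoc, hMvv, Matrix.mul_smul, Matrix.smul_mul]
  abel
end

section
/- Let v¹, …, vᴸ ∈ ℝⁿ be orthonormal vectors, let λ¹, …, λᴸ be real numbers, let M = Σ_{l=1}^{L} λˡ vˡ (vˡ)ᵀ, and let P = Σ_{l=1}^{L} vˡ (vˡ)ᵀ. Let A, D be d_x×d_x real matrices, B, E be d_x×d_u real matrices, and let x, w ∈ ℝ^{d_x×n}, u ∈ ℝ^{d_u×n} satisfy x⁺ = A x + B u + D x M + E u M + w. Then M(I − P) = 0 and x⁺(I − P) = A x(I − P) + B u(I − P) + w(I − P); that is, the auxiliary state x̆ = x(I − P) evolves as x̆⁺ = A x̆ + B ŭ + w̆ with ŭ = u(I − P) and w̆ = w(I − P). -/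
/-!
Orthonormality gives `(vᵏ)ᵀ P = (vᵏ)ᵀ`, hence `M P = M` and `M (I - P) = 0`. Right multiplication
by `I - P` therefore annihilates the coupling terms `D x M` and `E u M` of the dynamics.
-/

open Matrix

section Orthonormal

variable {R ι m : Type*} [CommSemiring R] [Fintype ι] [DecidableEq ι] [Fintype m]
  {v : ι → m → R}

theorem vecMul_sum_vecMulVec_of_orthonormal
    (horth : ∀ k l, v k ⬝ᵥ v l = if k = l then (1 : R) else 0) (k : ι) :
    v k ᵥ* ∑ l, vecMulVec (v l) (v l) = v k := by
  simp [vecMul_sum, vecMul_vecMulVec, horth, ite_smul]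

theorem sum_smul_vecMulVec_mul_sum_vecMulVec_of_orthonormal
    (horth : ∀ k l, v k ⬝ᵥ v l = if k = l then (1 : R) else 0) (c : ι → R) :
    (∑ l, c l • vecMulVec (v l) (v l)) * ∑ l, vecMulVec (v l) (v l) =
      ∑ l, c l • vecMulVec (v l) (v l) := by
  simp only [Finset.sum_mul, smul_mul_assoc, vecMulVec_mul,
    vecMul_sum_vecMulVec_of_orthonormal horth]

end Orthonormal

theorem coupled_dynamics_mul_of_mul_eq_zero {R p q r : Type*} [Semiring R]
    [Fintype p] [Fintype q] [Fintype r] {M Q : Matrix r r R} (hMQ : M * Q = 0)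
    (A D : Matrix p p R) (B E : Matrix p q R) (x w : Matrix p r R) (u : Matrix q r R) :
    (A * x + B * u + D * (x * M) + E * (u * M) + w) * Q = A * (x * Q) + B * (u * Q) + w * Q := by
  simp only [Matrix.add_mul, Matrix.mul_assoc, hMQ, Matrix.mul_zero, add_zero]

/-- **Auxiliary state dynamics.** For orthonormal `v¹, …, vᴸ`, coupling matrix
`M = ∑ l, λˡ vˡ (vˡ)ᵀ` and projection `P = ∑ l, vˡ (vˡ)ᵀ`, if the global state evolves as
`x⁺ = A x + B u + D x M + E u M + w` then `M (I - P) = 0` and the auxiliary state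
`x̆ = x (I - P)` evolves as `x̆⁺ = A x̆ + B ŭ + w̆`. -/
theorem auxiliary_state_dynamics
    {n L dx du : ℕ}
    (v : Fin L → (Fin n → ℝ))
    (horth : ∀ k l, v k ⬝ᵥ v l = if k = l then (1 : ℝ) else 0)
    (lam : Fin L → ℝ)
    (M P : Matrix (Fin n) (Fin n) ℝ)
    (hM : M = ∑ l : Fin L, lam l • vecMulVec (v l) (v l))
    (hP : P = ∑ l : Fin L, vecMulVec (v l) (v l))
    (A D : Matrix (Fin dx) (Fin dx) ℝ) (B E : Matrix (Fin dx) (Fin du) ℝ)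
    (x xp w : Matrix (Fin dx) (Fin n) ℝ) (u : Matrix (Fin du) (Fin n) ℝ)
    (hdyn : xp = A * x + B * u + D * (x * M) + E * (u * M) + w) :
    M * (1 - P) = 0 ∧
    xp * (1 - P) = A * (x * (1 - P)) + B * (u * (1 - P)) + w * (1 - P) := by
  have hMP : M * P = M := by
    rw [hM, hP, sum_smul_vecMulVec_mul_sum_vecMulVec_of_orthonormal horth]
  have hM0 : M * (1 - P) = 0 := by
    rw [mul_sub, mul_one, hMP, sub_self]
  exact ⟨hM0, hdyn ▸ coupled_dynamics_mul_of_mul_eq_zero hM0 A D B E x w u⟩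
end

section
/- Let v¹, …, vᴸ ∈ ℝⁿ be orthonormal vectors, let λ¹, …, λᴸ be real numbers, let M = Σ_{l=1}^{L} λˡ vˡ (vˡ)ᵀ, and let P = Σ_{l=1}^{L} vˡ (vˡ)ᵀ. Let H_x = Σ_{k=0}^{K_x} q_k Mᵏ and H_u = Σ_{k=0}^{K_u} r_k Mᵏ with real coefficients q_k, r_k, and set qˡ = Σ_{k=0}^{K_x} q_k (λˡ)ᵏ and rˡ = Σ_{k=0}^{K_u} r_k (λˡ)ᵏ. Let Q be a d_x×d_x real matrix, R a d_u×d_u real matrix, x ∈ ℝ^{d_x×n}, u ∈ ℝ^{d_u×n}. Write xˡ = x vˡ (vˡ)ᵀ with i-th column x^{l,i}, x̆ = x(I − P) with i-th column x̆ⁱ, and analogously uˡ, u^{l,i}, ŭ, ŭⁱ. Then Σ_{i=1}^{n} Σ_{j=1}^{n} [ (H_x)_{ij} (xⁱ)ᵀ Q xʲ + (H_u)_{ij} (uⁱ)ᵀ R uʲ ] = Σ_{i=1}^{n} [ q₀ (x̆ⁱ)ᵀ Q x̆ⁱ + r₀ (ŭⁱ)ᵀ R ŭⁱ + Σ_{l=1}^{L}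 ( qˡ (x^{l,i})ᵀ Q x^{l,i} + rˡ (u^{l,i})ᵀ R u^{l,i} ) ], where xⁱ and uⁱ denote the i-th columns of x and u. -/
/-!
The rank-one projections `vˡ (vˡ)ᵀ` are orthogonal idempotents, so polynomials in
`M = ∑ λˡ vˡ (vˡ)ᵀ` are computed spectrally: `∑ c_k Mᵏ = c₀ (I − P) + ∑ₗ c(λˡ) vˡ (vˡ)ᵀ`.
The cost `∑ᵢⱼ Hᵢⱼ (xⁱ)ᵀ Q xʲ` is the trace pairing `tr (Hᵀ xᵀ Q x)`, which is linear in `H`,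
and for a symmetric idempotent `S` it equals `tr ((x S)ᵀ Q (x S)) = ∑ᵢ ((x S)ⁱ)ᵀ Q (x S)ⁱ`,
the uncoupled cost of the projected state `x S`.
-/

open Matrix

/-- The `i`-th column of a `d × n` matrix. -/
def matCol {d n : ℕ} (y : Matrix (Fin d) (Fin n) ℝ) (i : Fin n) : Fin d → ℝ :=
  fun p => y p i

namespace OrthogonalIdempotents

variable {R A ι : Type*} [CommRing R] [Ring A] [Algebra R A] [Fintype ι] {e : ι → A}

theorem sum_smul_mul_sum_smul (he : OrthogonalIdempotents e) (a b : ι → R) :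
    (∑ i, a i • e i) * (∑ i, b i • e i) = ∑ i, (a i * b i) • e i := by
  classical
  simp [Finset.sum_mul, Finset.mul_sum, he.mul_eq, smul_smul, mul_comm (b _)]

theorem mul_sum_smul (he : OrthogonalIdempotents e) (a : ι → R) :
    (∑ i, e i) * (∑ i, a i • e i) = ∑ i, a i • e i := by
  simpa using he.sum_smul_mul_sum_smul 1 a

theorem sum_smul_pow (he : OrthogonalIdempotents e) (a : ι → R) (k : ℕ) :
    (∑ i, a i • e i) ^ k = (0 : R) ^ k • (1 - ∑ i, e i) + ∑ i, a i ^ k • e i := by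
  induction k with
  | zero => simp
  | succ k ih =>
    have hker : (1 - ∑ i, e i) * (∑ i, a i • e i) = 0 := by
      rw [sub_mul, one_mul, he.mul_sum_smul, sub_self]
    rw [pow_succ, ih, add_mul, smul_mul_assoc, hker, he.sum_smul_mul_sum_smul]
    simp [pow_succ]

theorem sum_range_smul_pow_sum_smul (he : OrthogonalIdempotents e) (a : ι → R) (K : ℕ)
    (c : ℕ → R) :
    ∑ k ∈ Finset.range (K + 1), c k • (∑ i, a i • e i) ^ k
      = c 0 • (1 - ∑ i, e i) + ∑ i, (∑ k ∈ Finset.range (K + 1), c k * a i ^ k) • e i := by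
  have hc : ∑ k ∈ Finset.range (K + 1), c k * (0 : R) ^ k = c 0 := by
    simp [Finset.sum_range_succ']
  simp only [he.sum_smul_pow, smul_add, Finset.sum_add_distrib, smul_smul, Finset.smul_sum,
    ← Finset.sum_smul, hc]
  rw [Finset.sum_comm]
  simp only [Finset.sum_smul]

end OrthogonalIdempotents

theorem orthogonalIdempotents_vecMulVec_self {ι n R : Type*} [Fintype n] [DecidableEq n]
    [DecidableEq ι] [CommSemiring R] (v : ι → n → R)
    (hv : ∀ k l, v k ⬝ᵥ v l = if k = l then 1 else 0) :
    OrthogonalIdempotents fun l ↦ vecMulVec (v l) (v l) := by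
  refine OrthogonalIdempotents.iff_mul_eq.2 fun k l ↦ ?_
  rw [vecMulVec_mul_vecMulVec, hv]
  split_ifs with h
  · rw [h, one_smul]
  · rw [zero_smul, vecMulVec_zero]

theorem isSymm_vecMulVec_self {n R : Type*} [CommMagma R] (w : n → R) :
    (vecMulVec w w).IsSymm :=
  transpose_vecMulVec w w

section QuadraticCost

variable {d n : ℕ} (W : Matrix (Fin d) (Fin d) ℝ) (y : Matrix (Fin d) (Fin n) ℝ)

theorem matCol_dotProduct_mulVec_matCol (i j : Fin n) :
    matCol y i ⬝ᵥ W *ᵥ matCol y j = (yᵀ * W * y) i j := by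
  simp only [matCol, dotProduct, mulVec, mul_apply, transpose_apply, Finset.mul_sum,
    Finset.sum_mul]
  rw [Finset.sum_comm]
  exact Finset.sum_congr rfl fun _ _ ↦ Finset.sum_congr rfl fun _ _ ↦ by ring

theorem sum_sum_mul_matCol_dotProduct_mulVec_matCol (H : Matrix (Fin n) (Fin n) ℝ) :
    ∑ i, ∑ j, H i j * (matCol y i ⬝ᵥ W *ᵥ matCol y j) = trace (Hᵀ * (yᵀ * W * y)) := by
  simp only [matCol_dotProduct_mulVec_matCol, trace, diag, mul_apply, transpose_apply]
  exact Finset.sum_comm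

theorem sum_matCol_mul_dotProduct_mulVec_matCol_mul {S : Matrix (Fin n) (Fin n) ℝ}
    (hS : S.IsSymm) (hS' : IsIdempotentElem S) :
    ∑ i, matCol (y * S) i ⬝ᵥ W *ᵥ matCol (y * S) i = trace (Sᵀ * (yᵀ * W * y)) := by
  have hconj : (y * S)ᵀ * W * (y * S) = Sᵀ * (yᵀ * W * y) * S := by
    simp only [transpose_mul, Matrix.mul_assoc]
  calc ∑ i, matCol (y * S) i ⬝ᵥ W *ᵥ matCol (y * S) i
      = trace (Sᵀ * (yᵀ * W * y) * S) := by
        simp only [matCol_dotProduct_mulVec_matCol, hconj, trace, diag]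
    _ = trace (S * (Sᵀ * (yᵀ * W * y))) := trace_mul_comm _ _
    _ = trace (Sᵀ * (yᵀ * W * y)) := by rw [← Matrix.mul_assoc, hS.eq, hS'.eq]

theorem sum_sum_mul_matCol_dotProduct_of_orthogonalIdempotents {ι : Type*} [Fintype ι]
    {e : ι → Matrix (Fin n) (Fin n) ℝ} (he : OrthogonalIdempotents e)
    (he_symm : ∀ l, (e l).IsSymm) (c : ℝ) (cl : ι → ℝ) :
    ∑ i, ∑ j, (c • (1 - ∑ l, e l) + ∑ l, cl l • e l) i j * (matCol y i ⬝ᵥ W *ᵥ matCol y j)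
      = ∑ i, (c * (matCol (y * (1 - ∑ l, e l)) i ⬝ᵥ W *ᵥ matCol (y * (1 - ∑ l, e l)) i)
          + ∑ l, cl l * (matCol (y * e l) i ⬝ᵥ W *ᵥ matCol (y * e l) i)) := by
  have hP_symm : (1 - ∑ l, e l).IsSymm :=
    isSymm_one.sub (by simp [IsSymm, transpose_sum, (he_symm _).eq])
  rw [sum_sum_mul_matCol_dotProduct_mulVec_matCol, Finset.sum_add_distrib,
    ← Finset.mul_sum, sum_matCol_mul_dotProduct_mulVec_matCol_mul W y hP_symm
      he.isIdempotentElem_sum.one_sub, Finset.sum_comm]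
  simp only [← Finset.mul_sum,
    sum_matCol_mul_dotProduct_mulVec_matCol_mul W y (he_symm _) (he.idem _)]
  simp [transpose_sum, Matrix.add_mul, Finset.sum_mul, trace_sum]

end QuadraticCost

/-- **Spectral decomposition of the per-step cost.** With orthonormal `v¹, …, vᴸ`,
`M = ∑ l, λˡ vˡ (vˡ)ᵀ`, `P = ∑ l, vˡ (vˡ)ᵀ`, cost-weight matrices
`H_x = ∑ q_k Mᵏ`, `H_u = ∑ r_k Mᵏ`, eigenstates `xˡ = x vˡ (vˡ)ᵀ` and auxiliary state
`x̆ = x (I − P)` (and similarly for `u`), the network cost decomposes as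
`∑ᵢⱼ [(H_x)ᵢⱼ (xⁱ)ᵀ Q xʲ + (H_u)ᵢⱼ (uⁱ)ᵀ R uʲ]
  = ∑ᵢ [q₀ (x̆ⁱ)ᵀ Q x̆ⁱ + r₀ (ŭⁱ)ᵀ R ŭⁱ + ∑ₗ (qˡ (x^{l,i})ᵀ Q x^{l,i} + rˡ (u^{l,i})ᵀ R u^{l,i})]`. -/
theorem per_step_cost_decomposition
    {n L dx du : ℕ}
    (v : Fin L → (Fin n → ℝ))
    (horth : ∀ k l, v k ⬝ᵥ v l = if k = l then (1 : ℝ) else 0)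
    (lam : Fin L → ℝ)
    (M P : Matrix (Fin n) (Fin n) ℝ)
    (hM : M = ∑ l : Fin L, lam l • vecMulVec (v l) (v l))
    (hP : P = ∑ l : Fin L, vecMulVec (v l) (v l))
    (Kx Ku : ℕ) (q r : ℕ → ℝ)
    (Hx Hu : Matrix (Fin n) (Fin n) ℝ)
    (hHx : Hx = ∑ k ∈ Finset.range (Kx + 1), q k • M ^ k)
    (hHu : Hu = ∑ k ∈ Finset.range (Ku + 1), r k • M ^ k)
    (ql rl : Fin L → ℝ)
    (hql : ∀ l, ql l = ∑ k ∈ Finset.range (Kx + 1), q k * lam l ^ k)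
    (hrl : ∀ l, rl l = ∑ k ∈ Finset.range (Ku + 1), r k * lam l ^ k)
    (Q : Matrix (Fin dx) (Fin dx) ℝ) (R : Matrix (Fin du) (Fin du) ℝ)
    (x : Matrix (Fin dx) (Fin n) ℝ) (u : Matrix (Fin du) (Fin n) ℝ) :
    ∑ i : Fin n, ∑ j : Fin n,
        (Hx i j * (matCol x i ⬝ᵥ Q.mulVec (matCol x j))
          + Hu i j * (matCol u i ⬝ᵥ R.mulVec (matCol u j)))
      = ∑ i : Fin n,
          (q 0 * (matCol (x * (1 - P)) i ⬝ᵥ Q.mulVec (matCol (x * (1 - P)) i))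
            + r 0 * (matCol (u * (1 - P)) i ⬝ᵥ R.mulVec (matCol (u * (1 - P)) i))
            + ∑ l : Fin L,
                (ql l * (matCol (x * vecMulVec (v l) (v l)) i ⬝ᵥ
                          Q.mulVec (matCol (x * vecMulVec (v l) (v l)) i))
                  + rl l * (matCol (u * vecMulVec (v l) (v l)) i ⬝ᵥ
                          R.mulVec (matCol (u * vecMulVec (v l) (v l)) i)))) := by
  have he := orthogonalIdempotents_vecMulVec_self v horth
  have he_symm l := isSymm_vecMulVec_self (v l)
  have hHx' : Hx = q 0 • (1 - P) + ∑ l, ql l • vecMulVec (v l) (v l) := by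
    rw [hHx, hM, he.sum_range_smul_pow_sum_smul, hP]
    simp only [hql]
  have hHu' : Hu = r 0 • (1 - P) + ∑ l, rl l • vecMulVec (v l) (v l) := by
    rw [hHu, hM, he.sum_range_smul_pow_sum_smul, hP]
    simp only [hrl]
  rw [Finset.sum_congr rfl fun i _ ↦ Finset.sum_add_distrib, Finset.sum_add_distrib, hHx', hHu',
    hP, sum_sum_mul_matCol_dotProduct_of_orthogonalIdempotents Q x he he_symm,
    sum_sum_mul_matCol_dotProduct_of_orthogonalIdempotents R u he he_symm]
  simp only [Finset.sum_add_distrib]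
  ring
end
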